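/- arXiv:1301.2942 — 2 statements merged into one kernel-verified Lean document; each statement's English description precedes it below -/
import Mathlib

section
/- Let n ≥ 2 and let (σ_H, g) be a normalized pair, with σ_H(a′, a) = ∏_{i=1}^{n−1} λ_i^{a′_n a_{in}}. Then for all a ∈ H(n) and b ∈ G(n−1): g(w(a), w(b)) = (∏_{i=1}^{n−1} λ_i^{b_i a_n (a_n − 1)/2} · g(v_{in}, u_i)^{a_n b_i (b_i − 1)/2}) · ∏_{1≤i<j≤n−1} g(v_{in}, u_j)^{b_i b_j a_n} (all exponents are integers). -/
open scoped BigOperators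

namespace FreeNilp

/-- Index set for pairs `(j,k)` with `j < k`. -/
abbrev PairIdx (n : ℕ) : Type := {p : Fin n × Fin n // p.1 < p.2}

/-- The free nilpotent group of class 2 and rank `n`, realized on
`ℤ^n × ℤ^{n(n-1)/2}`. -/
@[ext] structure G (n : ℕ) where
  u : Fin n → ℤ
  v : PairIdx n → ℤ

namespace G

instance (n : ℕ) : Group (G n) where
  mul r s := ⟨fun i => r.u i + s.u i, fun p => r.v p + s.v p + r.u p.1.1 * s.u p.1.2⟩
  one := ⟨fun _ => 0, fun _ => 0⟩
  inv r := ⟨fun i => -r.u i, fun p => -r.v p + r.u p.1.1 * r.u p.1.2⟩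
  mul_assoc r s t := by
    refine G.ext ?_ ?_ <;> funext x
    · show (r.u x + s.u x) + t.u x = r.u x + (s.u x + t.u x)
      ring
    · show (r.v x + s.v x + r.u x.1.1 * s.u x.1.2) + t.v x +
          (r.u x.1.1 + s.u x.1.1) * t.u x.1.2 =
        r.v x + (s.v x + t.v x + s.u x.1.1 * t.u x.1.2) +
          r.u x.1.1 * (s.u x.1.2 + t.u x.1.2)
      ring
  one_mul r := by
    refine G.ext ?_ ?_ <;> funext x
    · show 0 + r.u x = r.u x
      ring
    · show 0 + r.v x + 0 * r.u x.1.2 = r.v x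
      ring
  mul_one r := by
    refine G.ext ?_ ?_ <;> funext x
    · show r.u x + 0 = r.u x
      ring
    · show r.v x + 0 + r.u x.1.1 * 0 = r.v x
      ring
  inv_mul_cancel r := by
    refine G.ext ?_ ?_ <;> funext x
    · show -r.u x + r.u x = 0
      ring
    · show (-r.v x + r.u x.1.1 * r.u x.1.2) + r.v x + -r.u x.1.1 * r.u x.1.2 = 0
      ring

@[simp] lemma mul_u {n : ℕ} (r s : G n) (i : Fin n) : (r * s).u i = r.u i + s.u i := rfl
@[simp] lemma mul_v {n : ℕ} (r s : G n) (p : PairIdx n) :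
    (r * s).v p = r.v p + s.v p + r.u p.1.1 * s.u p.1.2 := rfl
@[simp] lemma one_u {n : ℕ} (i : Fin n) : (1 : G n).u i = 0 := rfl
@[simp] lemma one_v {n : ℕ} (p : PairIdx n) : (1 : G n).v p = 0 := rfl
@[simp] lemma inv_u {n : ℕ} (r : G n) (i : Fin n) : (r⁻¹).u i = -r.u i := rfl
@[simp] lemma inv_v {n : ℕ} (r : G n) (p : PairIdx n) :
    (r⁻¹).v p = -r.v p + r.u p.1.1 * r.u p.1.2 := rfl

end G

/-- First-block coordinate `r_i`. -/
def uc {n : ℕ} (r : G n) (i : Fin n) : ℤ := r.u i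

/-- Second-block coordinate `r_{jk}` (zero unless `j < k`). -/
def vc {n : ℕ} (r : G n) (j k : Fin n) : ℤ := if h : j < k then r.v ⟨(j, k), h⟩ else 0

/-- A multiplier (2-cocycle with values in the circle group) of a group. -/
def IsMultiplier {Γ : Type*} [Group Γ] (σ : Γ → Γ → Circle) : Prop :=
  (∀ r s t : Γ, σ r s * σ (r * s) t = σ r (s * t) * σ s t) ∧
  ∀ r : Γ, σ r 1 = 1 ∧ σ 1 r = 1

/-- Similarity (cohomology) of multipliers. -/
def Similar {Γ : Type*} [Group Γ] (σ τ : Γ → Γ → Circle) : Prop :=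
  ∃ β : Γ → Circle, ∀ r s : Γ, τ r s = β r * β s * (β (r * s))⁻¹ * σ r s

/-- The subgroup `H(n) ≅ ℤⁿ` of `G n`: only the coordinates `r_n` and `r_{jn}` may
be nonzero. -/
def Hsub (n : ℕ) : Subgroup (G n) where
  carrier := {r | (∀ i : Fin n, (i : ℕ) + 1 < n → r.u i = 0) ∧
                  ∀ p : PairIdx n, (p.1.2 : ℕ) + 1 < n → r.v p = 0}
  one_mem' := ⟨fun _ _ => rfl, fun _ _ => rfl⟩
  mul_mem' := by
    rintro r s ⟨hr1, hr2⟩ ⟨hs1, hs2⟩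
    refine ⟨fun i hi => ?_, fun p hp => ?_⟩
    · simp [hr1 i hi, hs1 i hi]
    · simp [hr2 p hp, hs2 p hp, hs1 p.1.2 hp]
  inv_mem' := by
    rintro r ⟨hr1, hr2⟩
    refine ⟨fun i hi => ?_, fun p hp => ?_⟩
    · simp [hr1 i hi]
    · simp [hr2 p hp, hr1 p.1.2 hp]

/-- The subgroup `G(n-1)` of `G n`: the coordinates `r_n` and `r_{jn}` vanish. -/
def Gsub (n : ℕ) : Subgroup (G n) where
  carrier := {r | (∀ i : Fin n, (i : ℕ) + 1 = n → r.u i = 0) ∧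
                  ∀ p : PairIdx n, (p.1.2 : ℕ) + 1 = n → r.v p = 0}
  one_mem' := ⟨fun _ _ => rfl, fun _ _ => rfl⟩
  mul_mem' := by
    rintro r s ⟨hr1, hr2⟩ ⟨hs1, hs2⟩
    refine ⟨fun i hi => ?_, fun p hp => ?_⟩
    · simp [hr1 i hi, hs1 i hi]
    · simp [hr2 p hp, hs2 p hp, hs1 p.1.2 hp]
  inv_mem' := by
    rintro r ⟨hr1, hr2⟩
    refine ⟨fun i hi => ?_, fun p hp => ?_⟩
    · simp [hr1 i hi]
    · simp [hr2 p hp, hr1 p.1.2 hp]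

lemma mem_Hsub_iff {n : ℕ} {r : G n} :
    r ∈ Hsub n ↔ (∀ i : Fin n, (i : ℕ) + 1 < n → r.u i = 0) ∧
      ∀ p : PairIdx n, (p.1.2 : ℕ) + 1 < n → r.v p = 0 := Iff.rfl

lemma mem_Gsub_iff {n : ℕ} {r : G n} :
    r ∈ Gsub n ↔ (∀ i : Fin n, (i : ℕ) + 1 = n → r.u i = 0) ∧
      ∀ p : PairIdx n, (p.1.2 : ℕ) + 1 = n → r.v p = 0 := Iff.rfl

/-- `H(n)` is a normal subgroup; conjugation preserves it. -/
lemma conj_mem_Hsub {n : ℕ} (s : G n) {a : G n} (ha : a ∈ Hsub n) :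
    s * a * s⁻¹ ∈ Hsub n := by
  obtain ⟨ha1, ha2⟩ := ha
  refine ⟨fun i hi => ?_, fun p hp => ?_⟩
  · simp [ha1 i hi]
  · have hj : (p.1.1 : ℕ) + 1 < n := by
      have h2 : (p.1.1 : ℕ) < (p.1.2 : ℕ) := p.2
      omega
    simp [ha2 p hp, ha1 p.1.2 hp, ha1 p.1.1 hj]

/-- The action `α_b(a) = b a b⁻¹` of `G(n-1)` on `H(n)`. -/
def conjH {n : ℕ} (b : Gsub n) (a : Hsub n) : Hsub n :=
  ⟨(b : G n) * (a : G n) * (b : G n)⁻¹, conj_mem_Hsub _ a.2⟩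

/-- The `H(n)`-part of the unique factorization `r = a·b`, `a ∈ H(n)`, `b ∈ G(n-1)`. -/
def hpart {n : ℕ} (r : G n) : Hsub n :=
  ⟨⟨fun i => if (i : ℕ) + 1 = n then r.u i else 0,
    fun p => if (p.1.2 : ℕ) + 1 = n then r.v p else 0⟩, by
    refine ⟨fun i hi => ?_, fun p hp => ?_⟩
    · exact if_neg (by omega)
    · exact if_neg (by omega)⟩

/-- The `G(n-1)`-part of the unique factorization `r = a·b`. -/
def gpart {n : ℕ} (r : G n) : Gsub n :=
  ⟨⟨fun i => if (i : ℕ) + 1 = n then 0 else r.u i,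
    fun p => if (p.1.2 : ℕ) + 1 = n then 0 else r.v p⟩, by
    refine ⟨fun i hi => ?_, fun p hp => ?_⟩
    · exact if_pos hi
    · exact if_pos hp⟩

/-- `r` indeed factors as `hpart r * gpart r`. -/
lemma hpart_mul_gpart {n : ℕ} (r : G n) : ((hpart r : G n)) * (gpart r : G n) = r := by
  refine G.ext ?_ ?_ <;> funext x
  · show (if ((x : ℕ)) + 1 = n then r.u x else 0) + (if (x : ℕ) + 1 = n then 0 else r.u x) = r.u x
    split <;> ring
  · show (if ((x.1.2 : ℕ)) + 1 = n then r.v x else 0) +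
      (if (x.1.2 : ℕ) + 1 = n then 0 else r.v x) +
      (if ((x.1.1 : ℕ)) + 1 = n then r.u x.1.1 else 0) *
        (if (x.1.2 : ℕ) + 1 = n then 0 else r.u x.1.2) = r.v x
    have h2 : (x.1.1 : ℕ) < (x.1.2 : ℕ) := x.2
    have h3 : (x.1.2 : ℕ) < n := x.1.2.isLt
    rcases eq_or_ne ((x.1.2 : ℕ) + 1) n with h | h
    · rw [if_pos h, if_pos h, if_pos h, if_neg (by omega)]; ring
    · rw [if_neg h, if_neg h, if_neg h, if_neg (show ¬((x.1.1 : ℕ) + 1 = n) by omega)]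
      ring

/-- An admissible pair `(σ_H, g)` (Mackey data with trivial multiplier on `G(n-1)`). -/
structure AdmissiblePair (n : ℕ) (σH : Hsub n → Hsub n → Circle)
    (g : Hsub n → Gsub n → Circle) : Prop where
  multH : IsMultiplier σH
  g_one_right : ∀ a : Hsub n, g a 1 = 1
  g_one_left : ∀ b : Gsub n, g 1 b = 1
  g_add : ∀ (a a' : Hsub n) (b : Gsub n),
    g (a * a') b = σH (conjH b a) (conjH b a') * (σH a a')⁻¹ * (g a b * g a' b)
  g_mul : ∀ (a : Hsub n) (b b' : Gsub n), g a (b * b') = g (conjH b' a) b * g a b'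

/-- An admissible triple `(σ_H, g, σ')`. -/
def AdmissibleTriple (n : ℕ) (σH : Hsub n → Hsub n → Circle)
    (g : Hsub n → Gsub n → Circle) (σ' : Gsub n → Gsub n → Circle) : Prop :=
  AdmissiblePair n σH g ∧ IsMultiplier σ'

/-- The map `σ_n(a′b, ab′) = σ_H(a′, α_b(a)) g(a,b) σ′(b,b′)` defined via the unique
factorizations. -/
noncomputable def sigmaN {n : ℕ} (σH : Hsub n → Hsub n → Circle) (g : Hsub n → Gsub n → Circle)
    (σ' : Gsub n → Gsub n → Circle) (r s : G n) : Circle :=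
  σH (hpart r) (conjH (gpart r) (hpart s)) * g (hpart s) (gpart r) *
    σ' (gpart r) (gpart s)

/-- The map `τ(a′b, ab′) = σ_H(a′, α_b(a)) g(a,b)` defined via the unique factorizations. -/
noncomputable def tauN {n : ℕ} (σH : Hsub n → Hsub n → Circle) (g : Hsub n → Gsub n → Circle)
    (r s : G n) : Circle :=
  σH (hpart r) (conjH (gpart r) (hpart s)) * g (hpart s) (gpart r)

/-- The generator `u_i`. -/
def uE {n : ℕ} (i : Fin n) : G n := ⟨fun j => if j = i then 1 else 0, fun _ => 0⟩

/-- The generator `v_{jk}`. -/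
def vE {n : ℕ} (j k : Fin n) : G n := ⟨fun _ => 0, fun p => if p.1 = (j, k) then 1 else 0⟩

/-- The last index `n` (i.e. `n-1` in `Fin n`). -/
def lastI (n : ℕ) (hn : 0 < n) : Fin n := ⟨n - 1, by omega⟩

/-- `u_n` as an element of `H(n)`. -/
def unH {n : ℕ} (hn : 0 < n) : Hsub n :=
  ⟨uE (lastI n hn), by
    refine ⟨fun i hi => ?_, fun p hp => rfl⟩
    have h : i ≠ lastI n hn := by
      intro h; apply absurd hi; rw [h]; show ¬ (n - 1) + 1 < n; omega
    simp [uE, h]⟩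

/-- `u_i` (for `i < n`) as an element of `G(n-1)`. -/
def uiG {n : ℕ} (i : Fin n) (hi : (i : ℕ) + 1 < n) : Gsub n :=
  ⟨uE i, by
    refine ⟨fun j hj => ?_, fun p hp => rfl⟩
    have h : j ≠ i := by intro h; rw [h] at hj; omega
    simp [uE, h]⟩

/-- `v_{in}` (for `i < n`) as an element of `H(n)`. -/
def vinH {n : ℕ} (i : Fin n) (hi : (i : ℕ) + 1 < n) : Hsub n :=
  ⟨vE i (lastI n (by omega)), by
    refine ⟨fun j hj => rfl, fun p hp => ?_⟩
    have h : p.1 ≠ (i, lastI n (by omega)) := by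
      intro h
      have h2 : (p.1.2 : ℕ) = n - 1 := by rw [h]; rfl
      omega
    simp [vE, h]⟩

/-- `v_{ij}` (for `j < n`) as an element of `G(n-1)`. -/
def vijG {n : ℕ} (i j : Fin n) (hj : (j : ℕ) + 1 < n) : Gsub n :=
  ⟨vE i j, by
    refine ⟨fun k hk => rfl, fun p hp => ?_⟩
    have h : p.1 ≠ (i, j) := by
      intro h
      have h2 : (p.1.2 : ℕ) = (j : ℕ) := by rw [h]
      omega
    simp [vE, h]⟩

/-- The "word part" `w(a)` of `a ∈ H(n)`. -/
def wH {n : ℕ} (a : Hsub n) : Hsub n :=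
  ⟨⟨(a : G n).u, fun _ => 0⟩,
    ⟨fun i hi => (mem_Hsub_iff.mp a.2).1 i hi, fun _ _ => rfl⟩⟩

/-- The "central part" `z(a)` of `a ∈ H(n)`. -/
def zH {n : ℕ} (a : Hsub n) : Hsub n :=
  ⟨⟨fun _ => 0, (a : G n).v⟩,
    ⟨fun _ _ => rfl, fun p hp => (mem_Hsub_iff.mp a.2).2 p hp⟩⟩

/-- The "word part" `w(b)` of `b ∈ G(n-1)`. -/
def wG {n : ℕ} (b : Gsub n) : Gsub n :=
  ⟨⟨(b : G n).u, fun _ => 0⟩,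
    ⟨fun i hi => (mem_Gsub_iff.mp b.2).1 i hi, fun _ _ => rfl⟩⟩

/-- The "central part" `z(b)` of `b ∈ G(n-1)`. -/
def zG {n : ℕ} (b : Gsub n) : Gsub n :=
  ⟨⟨fun _ => 0, (b : G n).v⟩,
    ⟨fun _ _ => rfl, fun p hp => (mem_Gsub_iff.mp b.2).2 p hp⟩⟩

/-- `g(v_{in}, u_j)`, as a total function (equal to `1` outside the admissible range). -/
noncomputable def gvu {n : ℕ} (g : Hsub n → Gsub n → Circle) (i j : Fin n) : Circle :=
  if h : (i : ℕ) + 1 < n ∧ (j : ℕ) + 1 < n then g (vinH i h.1) (uiG j h.2) else 1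

/-- `g(u_n, v_{ij})`, as a total function (equal to `1` outside the admissible range). -/
noncomputable def guv {n : ℕ} (g : Hsub n → Gsub n → Circle) (i j : Fin n) : Circle :=
  if h : (j : ℕ) + 1 < n then g (unH (by omega)) (vijG i j h) else 1

/-- A normalized pair `(σ_H, g)`: admissible, with `σ_H` of the standard `λ`-form, and
`g(u_n, u_i) = 1` for all `1 ≤ i ≤ n-1`. -/
def Normalized {n : ℕ} (hn : 0 < n) (σH : Hsub n → Hsub n → Circle)
    (g : Hsub n → Gsub n → Circle) (lam : Fin n → Circle) : Prop :=
  AdmissiblePair n σH g ∧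
  (∀ a' a : Hsub n, σH a' a =
    ∏ i ∈ Finset.univ.filter (fun i : Fin n => (i : ℕ) + 1 < n),
      lam i ^ (uc (a' : G n) (lastI n hn) * vc (a : G n) i (lastI n hn))) ∧
  ∀ (i : Fin n) (hi : (i : ℕ) + 1 < n), g (unH hn) (uiG i hi) = 1

/-- The multiplier `σ_λ` of `G n` attached to a family of parameters
`λ_{i,jk} ∈ 𝕋` (`1 ≤ i ≤ k`, `1 ≤ j < k ≤ n`). -/
noncomputable def sigmaLam {n : ℕ} (lam : Fin n → Fin n → Fin n → Circle) (r s : G n) : Circle :=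
  (∏ t ∈ Finset.univ.filter
      (fun t : Fin n × Fin n × Fin n => t.1 < t.2.1 ∧ t.2.1 < t.2.2),
    lam t.1 t.2.1 t.2.2 ^ (vc s t.2.1 t.2.2 * uc r t.1 + uc s t.2.2 * vc r t.1 t.2.1) *
    lam t.2.1 t.1 t.2.2 ^ (vc s t.1 t.2.2 * uc r t.2.1 +
      uc s t.2.2 * (uc r t.1 * uc r t.2.1 - vc r t.1 t.2.1))) *
  ∏ p ∈ Finset.univ.filter (fun p : Fin n × Fin n => p.1 < p.2),
    lam p.1 p.1 p.2 ^ (vc s p.1 p.2 * uc r p.1 +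
      uc s p.2 * (uc r p.1 * (uc r p.1 - 1) / 2)) *
    lam p.2 p.1 p.2 ^ (uc r p.2 * (vc s p.1 p.2 + uc r p.1 * uc s p.2) +
      uc r p.1 * (uc s p.2 * (uc s p.2 - 1) / 2))

/-- The extension of the parameter family to indices `i > k`, via
`λ_{k,ij} = λ_{i,jk}⁻¹ λ_{j,ik}` for `i < j < k`. -/
noncomputable def lamExt {n : ℕ} (lam : Fin n → Fin n → Fin n → Circle) (i j k : Fin n) : Circle :=
  if i ≤ k then lam i j k else (lam j k i)⁻¹ * lam k j i

end FreeNilp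

/-!
For `z` in the central part `⟨v_{1n}, …, v_{n-1,n}⟩` of `H(n)` we have `σ_H(z, ·) = 1` and
`σ_H(α_b(a), z) = σ_H(a, z)`, so `g(a z, b) = g(a, b) g(z, b)`; and `G(n-1)` fixes `z`, so
`g(z, ·)` is a homomorphism. Since `α_b(u_n ^ m) = u_n ^ m ∏ᵢ v_{in} ^ (m bᵢ)`, the function
`f m = g(u_n ^ m, b)` satisfies `f (m + 1) = f m · g(u_n, b) · (∏ᵢ λᵢ ^ bᵢ) ^ m`, whence
`g(u_n ^ m, b) = g(u_n, b) ^ m (∏ᵢ λᵢ ^ bᵢ) ^ (m(m-1)/2)`. To compute `g(u_n, w(b))`, write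
`w(b) = u_{n-1} ^ b_{n-1} ⋯ u_1 ^ b_1` and peel off the leftmost factor `uᵢ ^ bᵢ` with
`g(a, b b') = g(α_{b'}(a), b) g(a, b')`: conjugating `u_n` by the remaining factors creates
`∏_{j<i} v_{jn} ^ b_j`, which contributes `∏_{j<i} g(v_{jn}, uᵢ) ^ (b_j bᵢ)`, while the same
recurrence for `m ↦ g(u_n, uᵢ ^ m)`, now with `g(u_n, uᵢ) = 1`, gives
`g(v_{in}, uᵢ) ^ (bᵢ(bᵢ-1)/2)`.
-/
lemma Int.mul_sub_one_ediv_two_add_one (m : ℤ) :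
    (m + 1) * (m + 1 - 1) / 2 = m * (m - 1) / 2 + m := by
  rw [add_sub_cancel_right, show (m + 1) * m = m * (m - 1) + m * 2 by ring,
    Int.add_mul_ediv_right _ _ two_ne_zero]

lemma eq_zpow_mul_zpow_of_succ {M : Type*} [CommGroup M] {f : ℤ → M} {c d : M}
    (h0 : f 0 = 1) (hsucc : ∀ m, f (m + 1) = f m * c * d ^ m) (m : ℤ) :
    f m = c ^ m * d ^ (m * (m - 1) / 2) := by
  have step (k : ℤ) : c ^ (k + 1) * d ^ ((k + 1) * (k + 1 - 1) / 2) =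
      c ^ k * d ^ (k * (k - 1) / 2) * c * d ^ k := by
    rw [Int.mul_sub_one_ediv_two_add_one, zpow_add_one, zpow_add]
    ac_rfl
  induction m using Int.induction_on with
  | zero => simp [h0]
  | succ k ih => rw [hsucc, ih, step]
  | pred k ih =>
    have h := hsucc (-k - 1)
    have e := step (-k - 1)
    rw [sub_add_cancel] at h e
    rw [ih, e] at h
    exact (mul_right_cancel (mul_right_cancel h)).symm

lemma eq_zpow_of_succ {M : Type*} [CommGroup M] {f : ℤ → M} {c : M}
    (h0 : f 0 = 1) (hsucc : ∀ m, f (m + 1) = f m * c) (m : ℤ) : f m = c ^ m := by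
  simpa using eq_zpow_mul_zpow_of_succ (d := 1) h0 (by simpa using hsucc) m

lemma eq_prod_zpow_of_map_add {ι M : Type*} [Fintype ι] [DecidableEq ι] [CommGroup M]
    {ψ : (ι → ℤ) → M} (hψ : ∀ c c', ψ (c + c') = ψ c * ψ c') (c : ι → ℤ) :
    ψ c = ∏ i, ψ (Pi.single i (1 : ℤ)) ^ c i := by
  let φ : (ι → ℤ) →+ Additive M := AddMonoidHom.mk' (fun c => Additive.ofMul (ψ c)) hψ
  have h0 : ψ 0 = 1 := by simpa using hψ 0 0
  have hsingle (i : ι) (m : ℤ) : ψ (Pi.single i m) = ψ (Pi.single i (1 : ℤ)) ^ m :=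
    eq_zpow_of_succ (f := fun m => ψ (Pi.single i m)) (by simpa using h0)
      (fun m => by simp only [Pi.single_add, hψ]) m
  calc ψ c = Additive.toMul (φ (∑ i, Pi.single i (c i))) := by rw [Finset.univ_sum_single]; rfl
    _ = ∏ i, ψ (Pi.single i (1 : ℤ)) ^ c i := by
      rw [map_sum, toMul_sum]
      exact Finset.prod_congr rfl fun i _ => hsingle i (c i)

namespace FreeNilp

section Elements

variable {n : ℕ}

def unPow (n : ℕ) (m : ℤ) : Hsub n :=
  ⟨⟨fun i => if (i : ℕ) + 1 = n then m else 0, fun _ => 0⟩,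
    fun _ _ => if_neg (by omega), fun _ _ => rfl⟩

def uiPow (i : Fin n) (hi : (i : ℕ) + 1 < n) (m : ℤ) : Gsub n :=
  ⟨⟨fun j => if j = i then m else 0, fun _ => 0⟩,
    fun j hj => if_neg (by rintro rfl; omega), fun _ _ => rfl⟩

/-- The central element `∏ᵢ v_{in} ^ cᵢ` of `H(n)`; the last coordinate of `c` is ignored. -/
def vnProd (c : Fin n → ℤ) : Hsub n :=
  ⟨⟨fun _ => 0, fun p => if (p.1.2 : ℕ) + 1 = n then c p.1.1 else 0⟩,
    fun _ _ => rfl, fun _ _ => if_neg (by omega)⟩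

/-- The product `u_k ^ b_k ⋯ u_1 ^ b_1` of the first `k` factors of
`w(b) = u_{n-1} ^ b_{n-1} ⋯ u_1 ^ b_1`; in this decreasing order it has no `v`-coordinates. -/
def wTrunc (b : Gsub n) (k : ℕ) : Gsub n :=
  ⟨⟨fun i => if (i : ℕ) < k then (b : G n).u i else 0, fun _ => 0⟩,
    fun i hi => by simp [(mem_Gsub_iff.mp b.2).1 i hi], fun _ _ => rfl⟩

lemma unPow_mul (m m' : ℤ) : unPow n m * unPow n m' = unPow n (m + m') := by
  refine Subtype.ext <| G.ext (funext fun i => ?_) (funext fun p => ?_)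
  · show (if _ then m else 0) + (if _ then m' else 0) = if _ then m + m' else 0
    split_ifs <;> simp
  · have := p.2
    show 0 + 0 + (if (p.1.1 : ℕ) + 1 = n then m else 0) * _ = 0
    rw [if_neg (by omega)]; simp

lemma unPow_zero : unPow n 0 = 1 :=
  Subtype.ext <| G.ext (funext fun _ => ite_self 0) rfl

lemma unPow_one (h0 : 0 < n) : unPow n 1 = unH h0 := by
  refine Subtype.ext <| G.ext (funext fun i => ?_) rfl
  show (if (i : ℕ) + 1 = n then 1 else 0) = if i = lastI n h0 then 1 else 0
  have h : (i : ℕ) + 1 = n ↔ i = lastI n h0 := by simp only [Fin.ext_iff, lastI]; omega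
  simp only [h]

lemma uiPow_mul (i : Fin n) (hi : (i : ℕ) + 1 < n) (m m' : ℤ) :
    uiPow i hi m * uiPow i hi m' = uiPow i hi (m + m') := by
  refine Subtype.ext <| G.ext (funext fun j => ?_) (funext fun p => ?_)
  · show (if _ then m else 0) + (if _ then m' else 0) = if _ then m + m' else 0
    split_ifs <;> simp
  · have := p.2
    show 0 + 0 + (if p.1.1 = i then m else 0) * (if p.1.2 = i then m' else 0) = 0
    split_ifs <;> simp_all

lemma uiPow_zero (i : Fin n) (hi : (i : ℕ) + 1 < n) : uiPow i hi 0 = 1 :=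
  Subtype.ext <| G.ext (funext fun _ => ite_self 0) rfl

lemma uiPow_one (i : Fin n) (hi : (i : ℕ) + 1 < n) : uiPow i hi 1 = uiG i hi := rfl

lemma vnProd_add (c c' : Fin n → ℤ) : vnProd (c + c') = vnProd c * vnProd c' := by
  refine Subtype.ext <| G.ext (funext fun i => (add_zero 0).symm) (funext fun p => ?_)
  show (if _ then c p.1.1 + c' p.1.1 else 0) =
    (if _ then c p.1.1 else 0) + (if _ then _ else 0) + 0 * 0
  split_ifs <;> simp

lemma vnProd_single {i : Fin n} (hi : (i : ℕ) + 1 < n) :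
    vnProd (Pi.single i 1 : Fin n → ℤ) = vinH i hi := by
  refine Subtype.ext <| G.ext rfl (funext fun p => ?_)
  show (if (p.1.2 : ℕ) + 1 = n then (Pi.single i 1 : Fin n → ℤ) p.1.1 else 0) =
    if p.1 = (i, lastI n (by omega)) then 1 else 0
  simp only [Pi.single_apply, Prod.ext_iff, Fin.ext_iff, lastI]
  split_ifs <;> omega

lemma vnProd_single_of_not_lt {i : Fin n} (hi : ¬ (i : ℕ) + 1 < n) :
    vnProd (Pi.single i 1 : Fin n → ℤ) = 1 := by
  refine Subtype.ext <| G.ext rfl (funext fun p => ?_)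
  have := p.2
  show (if (p.1.2 : ℕ) + 1 = n then (Pi.single i 1 : Fin n → ℤ) p.1.1 else 0) = 0
  simp only [Pi.single_apply, Fin.ext_iff]
  split_ifs <;> omega

lemma conjH_u (b : Gsub n) (a : Hsub n) : ((conjH b a : Hsub n) : G n).u = (a : G n).u :=
  funext fun i => show (b : G n).u i + (a : G n).u i + -(b : G n).u i = _ by ring

lemma conjH_v (b : Gsub n) (a : Hsub n) (p : PairIdx n) :
    ((conjH b a : Hsub n) : G n).v p =
      (a : G n).v p + (b : G n).u p.1.1 * (a : G n).u p.1.2 := by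
  have hp : (p.1.1 : ℕ) + 1 < n := by have := p.2; have := p.1.2.2; omega
  have ha := (mem_Hsub_iff.mp a.2).1 p.1.1 hp
  show ((b : G n) * a * (b : G n)⁻¹).v p = _
  simp [ha]
  ring

lemma conjH_vnProd (b : Gsub n) (c : Fin n → ℤ) : conjH b (vnProd c) = vnProd c :=
  Subtype.ext <| G.ext (conjH_u b _) (funext fun p => by
    rw [conjH_v, show ((vnProd c : Hsub n) : G n).u p.1.2 = 0 from rfl, mul_zero, add_zero])

lemma conjH_unPow (b : Gsub n) (m : ℤ) :
    conjH b (unPow n m) = unPow n m * vnProd (fun i => m * (b : G n).u i) := by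
  refine Subtype.ext <| G.ext ((conjH_u b _).trans (funext fun i => (add_zero _).symm))
    (funext fun p => ?_)
  have := p.2
  rw [conjH_v]
  show 0 + (b : G n).u p.1.1 * (if (p.1.2 : ℕ) + 1 = n then m else 0) =
    0 + (if (p.1.2 : ℕ) + 1 = n then m * (b : G n).u p.1.1 else 0) +
      (if (p.1.1 : ℕ) + 1 = n then m else 0) * 0
  split_ifs <;> ring

lemma wTrunc_zero (b : Gsub n) : wTrunc b 0 = 1 :=
  Subtype.ext <| G.ext (funext fun i =>
    show (if (i : ℕ) < 0 then (b : G n).u i else 0) = 0 from if_neg (Nat.not_lt_zero _)) rfl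

lemma wTrunc_succ (b : Gsub n) {k : ℕ} (hk : k + 1 < n) :
    wTrunc b (k + 1) = uiPow ⟨k, by omega⟩ hk ((b : G n).u ⟨k, by omega⟩) * wTrunc b k := by
  refine Subtype.ext <| G.ext (funext fun i => ?_) (funext fun p => ?_)
  · show (if (i : ℕ) < k + 1 then _ else 0) =
      (if i = ⟨k, _⟩ then _ else 0) + (if (i : ℕ) < k then _ else 0)
    rcases lt_trichotomy (i : ℕ) k with h | h | h
    · rw [if_pos (by omega), if_neg (fun e => by rw [e] at h; simp at h), if_pos h, zero_add]
    · rw [if_pos (by omega), if_pos (Fin.ext h), if_neg (by omega), add_zero,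
        (Fin.ext h : i = ⟨k, by omega⟩)]
    · rw [if_neg (by omega), if_neg (fun e => by rw [e] at h; simp at h), if_neg (by omega),
        add_zero]
  · show 0 = 0 + 0 + (if p.1.1 = ⟨k, _⟩ then _ else 0) * (if (p.1.2 : ℕ) < k then _ else 0)
    by_cases h : p.1.1 = ⟨k, by omega⟩
    · have hlt : k < (p.1.2 : ℕ) := by
        have := Fin.lt_def.mp p.2
        rwa [h] at this
      rw [if_neg (show ¬ (p.1.2 : ℕ) < k by omega)]
      simp
    · rw [if_neg h]
      simp

lemma wG_eq_wTrunc (b : Gsub n) : wG b = wTrunc b (n - 1) := by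
  refine Subtype.ext <| G.ext (funext fun i => ?_) rfl
  show (b : G n).u i = if (i : ℕ) < n - 1 then (b : G n).u i else 0
  split_ifs with h
  · rfl
  · exact (mem_Gsub_iff.mp b.2).1 i (by omega)

lemma wH_eq_unPow (h0 : 0 < n) (a : Hsub n) : wH a = unPow n ((a : G n).u (lastI n h0)) := by
  refine Subtype.ext <| G.ext (funext fun i => ?_) rfl
  show (a : G n).u i = if (i : ℕ) + 1 = n then (a : G n).u (lastI n h0) else 0
  split_ifs with h
  · congr 1; ext; simp [lastI]; omega
  · exact (mem_Hsub_iff.mp a.2).1 i (by omega)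

lemma unPow_u_lastI (h0 : 0 < n) (m : ℤ) : ((unPow n m : Hsub n) : G n).u (lastI n h0) = m :=
  if_pos (by simp only [lastI]; omega)

lemma vc_lastI (h0 : 0 < n) (r : G n) {i : Fin n} (hi : (i : ℕ) + 1 < n) :
    vc r i (lastI n h0) = r.v ⟨(i, lastI n h0), Fin.lt_def.mpr (by simp only [lastI]; omega)⟩ :=
  dif_pos _

lemma wG_u (b : Gsub n) : ((wG b : Gsub n) : G n).u = (b : G n).u := rfl

end Elements

section Cocycle

variable {n : ℕ} {h0 : 0 < n} {σH : Hsub n → Hsub n → Circle}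
  {g : Hsub n → Gsub n → Circle} {lam : Fin n → Circle}

def IsLambdaForm (h0 : 0 < n) (σH : Hsub n → Hsub n → Circle) (lam : Fin n → Circle) :
    Prop :=
  ∀ a' a : Hsub n, σH a' a =
    ∏ i ∈ Finset.univ.filter (fun i : Fin n => (i : ℕ) + 1 < n),
      lam i ^ (uc (a' : G n) (lastI n h0) * vc (a : G n) i (lastI n h0))

lemma sigma_conjH_left (hσ : IsLambdaForm h0 σH lam) (b : Gsub n) (a' a : Hsub n) :
    σH (conjH b a') a = σH a' a := by
  rw [hσ (conjH b a') a, hσ a' a]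
  simp only [uc, conjH_u]

lemma sigma_vnProd_left (hσ : IsLambdaForm h0 σH lam) (c : Fin n → ℤ) (a : Hsub n) :
    σH (vnProd c) a = 1 :=
  (hσ _ _).trans <| Finset.prod_eq_one fun _ _ => by simp [uc, vnProd]

lemma sigma_unPow_unPow (hσ : IsLambdaForm h0 σH lam) (m m' : ℤ) :
    σH (unPow n m) (unPow n m') = 1 :=
  (hσ _ _).trans <| Finset.prod_eq_one fun _ _ => by simp [vc, unPow]

lemma sigma_conjH_unPow (hσ : IsLambdaForm h0 σH lam) (b : Gsub n) (m : ℤ) :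
    σH (conjH b (unPow n m)) (conjH b (unPow n 1)) =
      (∏ i ∈ Finset.univ.filter (fun i : Fin n => (i : ℕ) + 1 < n),
        lam i ^ (b : G n).u i) ^ m := by
  rw [hσ, ← Finset.prod_zpow]
  refine Finset.prod_congr rfl fun i hi => ?_
  have hv : vc ((conjH b (unPow n 1) : Hsub n) : G n) i (lastI n h0) = (b : G n).u i := by
    rw [vc_lastI h0 _ (Finset.mem_filter.mp hi).2, conjH_v]
    show 0 + (b : G n).u i * ((unPow n 1 : Hsub n) : G n).u (lastI n h0) = _
    rw [unPow_u_lastI h0, zero_add, mul_one]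
  rw [uc, conjH_u, unPow_u_lastI h0, hv, ← zpow_mul, mul_comm]

lemma g_mul_vnProd (hA : AdmissiblePair n σH g) (hσ : IsLambdaForm h0 σH lam) (a : Hsub n)
    (c : Fin n → ℤ) (b : Gsub n) : g (a * vnProd c) b = g a b * g (vnProd c) b := by
  rw [hA.g_add, conjH_vnProd, sigma_conjH_left hσ, mul_inv_cancel, one_mul]

lemma g_vnProd_add (hA : AdmissiblePair n σH g) (hσ : IsLambdaForm h0 σH lam)
    (c c' : Fin n → ℤ) (b : Gsub n) :
    g (vnProd (c + c')) b = g (vnProd c) b * g (vnProd c') b := by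
  rw [vnProd_add, g_mul_vnProd hA hσ]

lemma g_vnProd_mul (hA : AdmissiblePair n σH g) (c : Fin n → ℤ) (b b' : Gsub n) :
    g (vnProd c) (b * b') = g (vnProd c) b * g (vnProd c) b' := by
  rw [hA.g_mul, conjH_vnProd]

lemma gvu_eq_g_vnProd (hA : AdmissiblePair n σH g) {k : Fin n} (hk : (k : ℕ) + 1 < n)
    (i : Fin n) :
    gvu g i k = g (vnProd (Pi.single i 1 : Fin n → ℤ)) (uiG k hk) := by
  by_cases hi : (i : ℕ) + 1 < n
  · rw [gvu, dif_pos ⟨hi, hk⟩, vnProd_single hi]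
  · rw [gvu, dif_neg (fun h => hi h.1), vnProd_single_of_not_lt hi, hA.g_one_left]

lemma g_vnProd_uiG (hA : AdmissiblePair n σH g) (hσ : IsLambdaForm h0 σH lam) (c : Fin n → ℤ)
    {k : Fin n} (hk : (k : ℕ) + 1 < n) : g (vnProd c) (uiG k hk) = ∏ i, gvu g i k ^ c i := by
  rw [eq_prod_zpow_of_map_add (ψ := fun c => g (vnProd c) (uiG k hk))
    (fun c c' => g_vnProd_add hA hσ c c' _) c]
  simp only [gvu_eq_g_vnProd hA hk]

lemma g_vnProd_uiPow (hA : AdmissiblePair n σH g) (c : Fin n → ℤ) {k : Fin n}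
    (hk : (k : ℕ) + 1 < n) (m : ℤ) :
    g (vnProd c) (uiPow k hk m) = g (vnProd c) (uiG k hk) ^ m :=
  eq_zpow_of_succ (f := fun m => g (vnProd c) (uiPow k hk m))
    (by simp only [uiPow_zero, hA.g_one_right])
    (fun m => by rw [← uiPow_mul, g_vnProd_mul hA, uiPow_one]) m

lemma g_unPow (hA : AdmissiblePair n σH g) (hσ : IsLambdaForm h0 σH lam) (b : Gsub n) (m : ℤ) :
    g (unPow n m) b = g (unPow n 1) b ^ m *
      (∏ i ∈ Finset.univ.filter (fun i : Fin n => (i : ℕ) + 1 < n), lam i ^ (b : G n).u i) ^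
        (m * (m - 1) / 2) :=
  eq_zpow_mul_zpow_of_succ (f := fun m => g (unPow n m) b) (by rw [unPow_zero, hA.g_one_left])
    (fun m => by
      rw [← unPow_mul, hA.g_add, sigma_conjH_unPow hσ, sigma_unPow_unPow hσ, inv_one, mul_one,
        mul_comm]) m

lemma g_unPow_one_uiPow (hA : AdmissiblePair n σH g) (hσ : IsLambdaForm h0 σH lam)
    (hgu : ∀ (i : Fin n) (hi : (i : ℕ) + 1 < n), g (unH h0) (uiG i hi) = 1)
    {k : Fin n} (hk : (k : ℕ) + 1 < n) (m : ℤ) :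
    g (unPow n 1) (uiPow k hk m) = gvu g k k ^ (m * (m - 1) / 2) := by
  have hgu' : g (unPow n 1) (uiG k hk) = 1 := by rw [unPow_one h0]; exact hgu k hk
  have hconj :
      conjH (uiG k hk) (unPow n 1) = unPow n 1 * vnProd (Pi.single k 1 : Fin n → ℤ) := by
    rw [conjH_unPow]
    congr 2
    funext i
    simp [uiG, uE, Pi.single_apply]
  simpa using eq_zpow_mul_zpow_of_succ (f := fun m => g (unPow n 1) (uiPow k hk m))
    (c := 1) (d := gvu g k k) (by rw [uiPow_zero, hA.g_one_right])
    (fun m => by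
      rw [← uiPow_mul, uiPow_one, hA.g_mul, hconj, g_mul_vnProd hA hσ, g_vnProd_uiPow hA,
        ← gvu_eq_g_vnProd hA, hgu', mul_one, mul_one]) m

end Cocycle

section WordPart

variable {n : ℕ} {h0 : 0 < n} {σH : Hsub n → Hsub n → Circle}
  {g : Hsub n → Gsub n → Circle} {lam : Fin n → Circle}

lemma filter_val_lt_succ {k : ℕ} (hk : k < n) :
    Finset.univ.filter (fun i : Fin n => (i : ℕ) < k + 1) =
      insert ⟨k, hk⟩ (Finset.univ.filter (fun i : Fin n => (i : ℕ) < k)) := by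
  ext i
  simp only [Finset.mem_filter, Finset.mem_univ, true_and, Finset.mem_insert, Fin.ext_iff]
  omega

lemma prod_filter_prod_filter_lt {M : Type*} [CommMonoid M] (f : Fin n → Fin n → M) :
    ∏ i ∈ Finset.univ.filter (fun i : Fin n => (i : ℕ) + 1 < n),
        ∏ j ∈ Finset.univ.filter (fun j => j < i), f j i =
      ∏ p ∈ Finset.univ.filter (fun p : Fin n × Fin n => p.1 < p.2 ∧ (p.2 : ℕ) + 1 < n),
        f p.1 p.2 := by
  simp only [Finset.prod_filter]
  rw [Fintype.prod_prod_type_right]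
  refine Finset.prod_congr rfl fun i _ => ?_
  by_cases h : (i : ℕ) + 1 < n <;> simp [h]

lemma g_unPow_one_wTrunc (hA : AdmissiblePair n σH g) (hσ : IsLambdaForm h0 σH lam)
    (hgu : ∀ (i : Fin n) (hi : (i : ℕ) + 1 < n), g (unH h0) (uiG i hi) = 1)
    (b : Gsub n) {k : ℕ} (hk : k < n) :
    g (unPow n 1) (wTrunc b k) =
      ∏ i ∈ Finset.univ.filter (fun i : Fin n => (i : ℕ) < k),
        (gvu g i i ^ ((b : G n).u i * ((b : G n).u i - 1) / 2) *
          ∏ j ∈ Finset.univ.filter (fun j => j < i),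
            gvu g j i ^ ((b : G n).u j * (b : G n).u i)) := by
  induction k with
  | zero => simp [wTrunc_zero, hA.g_one_right]
  | succ k ih =>
    set K : Fin n := ⟨k, by omega⟩
    have hcross : g (vnProd fun i => 1 * ((wTrunc b k : Gsub n) : G n).u i) (uiG K hk) ^
        (b : G n).u K =
        ∏ j ∈ Finset.univ.filter (fun j => j < K),
          gvu g j K ^ ((b : G n).u j * (b : G n).u K) := by
      rw [g_vnProd_uiG hA hσ, ← Finset.prod_zpow, Finset.prod_filter]
      refine Finset.prod_congr rfl fun j _ => ?_
      rw [← zpow_mul]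
      simp only [show j < K ↔ (j : ℕ) < k from Fin.lt_def]
      show gvu g j K ^ ((1 * if (j : ℕ) < k then _ else 0) * _) = _
      split_ifs <;> simp
    rw [wTrunc_succ b hk, hA.g_mul, conjH_unPow, g_mul_vnProd hA hσ, g_unPow_one_uiPow hA hσ hgu,
      g_vnProd_uiPow hA, hcross, ih (by omega), filter_val_lt_succ (by omega),
      Finset.prod_insert (by simp)]

lemma g_unPow_one_wG (hA : AdmissiblePair n σH g) (hσ : IsLambdaForm h0 σH lam)
    (hgu : ∀ (i : Fin n) (hi : (i : ℕ) + 1 < n), g (unH h0) (uiG i hi) = 1) (b : Gsub n) :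
    g (unPow n 1) (wG b) =
      ∏ i ∈ Finset.univ.filter (fun i : Fin n => (i : ℕ) + 1 < n),
        (gvu g i i ^ ((b : G n).u i * ((b : G n).u i - 1) / 2) *
          ∏ j ∈ Finset.univ.filter (fun j => j < i),
            gvu g j i ^ ((b : G n).u j * (b : G n).u i)) := by
  rw [wG_eq_wTrunc, g_unPow_one_wTrunc hA hσ hgu b (by omega)]
  exact Finset.prod_congr (Finset.filter_congr fun i _ => by omega) fun _ _ => rfl

end WordPart

/-- the value of `g` on the `w`-parts. -/
theorem g_w_parts (n : ℕ) (hn : 2 ≤ n) (lam : Fin n → Circle)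
    (σH : Hsub n → Hsub n → Circle) (g : Hsub n → Gsub n → Circle)
    (hnorm : Normalized (show 0 < n by omega) σH g lam) :
    ∀ (a : Hsub n) (b : Gsub n),
      g (wH a) (wG b) =
        (∏ i ∈ Finset.univ.filter (fun i : Fin n => (i : ℕ) + 1 < n),
          lam i ^ (uc (b : G n) i * (uc (a : G n) (lastI n (by omega)) *
              (uc (a : G n) (lastI n (by omega)) - 1) / 2)) *
          gvu g i i ^ (uc (a : G n) (lastI n (by omega)) *
              (uc (b : G n) i * (uc (b : G n) i - 1) / 2))) *
        ∏ p ∈ Finset.univ.filter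
            (fun p : Fin n × Fin n => p.1 < p.2 ∧ (p.2 : ℕ) + 1 < n),
          gvu g p.1 p.2 ^ (uc (b : G n) p.1 * uc (b : G n) p.2 *
            uc (a : G n) (lastI n (by omega))) := by
  obtain ⟨hA, hσ, hgu⟩ := hnorm
  intro a b
  rw [wH_eq_unPow (by omega) a, g_unPow hA hσ, g_unPow_one_wG hA hσ hgu,
    ← prod_filter_prod_filter_lt fun j i => gvu g j i ^ (uc (b : G n) j * uc (b : G n) i *
      uc (a : G n) (lastI n (by omega)))]
  simp only [uc, wG_u]
  rw [← Finset.prod_zpow, ← Finset.prod_zpow, ← Finset.prod_mul_distrib,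
    ← Finset.prod_mul_distrib]
  refine Finset.prod_congr rfl fun i _ => ?_
  simp only [mul_zpow, ← zpow_mul, ← Finset.prod_zpow]
  rw [mul_comm ((b : G n).u i * ((b : G n).u i - 1) / 2)]
  ac_rfl

end FreeNilp
end

section
/- Let n ≥ 2. For every family λ = (λ_{i,jk}) of elements of 𝕋 indexed by 1 ≤ i ≤ k and 1 ≤ j < k ≤ n, the map σ_λ : G(n) × G(n) → 𝕋 given by the explicit formula is a multiplier of G(n): it satisfies σ_λ(r,s)σ_λ(rs,t) = σ_λ(r,st)σ_λ(s,t) and σ_λ(r,e) = σ_λ(e,r) = 1 for all r, s, t ∈ G(n). -/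
open scoped BigOperators

namespace FreeNilp

/-
Each factor of `σ_λ` has the form `λ ^ e(r, s)` with `e` a normalized `ℤ`-valued 2-cocycle
on `G n`, and multipliers are closed under pointwise products, so it suffices to check the
additive cocycle identity for the four families of exponents. Since `r ↦ r_{jk}` is additive
up to the term `r_j s_k`, and `x ↦ x (x - 1) / 2` up to `x y`, each identity becomes a
polynomial identity in the coordinates of `r, s, t`.
-/

section Multiplier

variable {Γ : Type*} [Group Γ]

def IsIntCocycle (f : Γ → Γ → ℤ) : Prop :=
  (∀ r s t : Γ, f r s + f (r * s) t = f r (s * t) + f s t) ∧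
  ∀ r : Γ, f r 1 = 0 ∧ f 1 r = 0

theorem IsIntCocycle.isMultiplier_zpow {f : Γ → Γ → ℤ} (hf : IsIntCocycle f) (x : Circle) :
    IsMultiplier fun r s => x ^ f r s := by
  refine ⟨fun r s t => ?_, fun r => ?_⟩
  · rw [← zpow_add, ← zpow_add, hf.1]
  · simp [(hf.2 r).1, (hf.2 r).2]

theorem IsMultiplier.mul {σ τ : Γ → Γ → Circle} (hσ : IsMultiplier σ) (hτ : IsMultiplier τ) :
    IsMultiplier fun r s => σ r s * τ r s := by
  refine ⟨fun r s t => ?_, fun r => ?_⟩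
  · rw [mul_mul_mul_comm, hσ.1, hτ.1, mul_mul_mul_comm]
  · simp [(hσ.2 r).1, (hσ.2 r).2, (hτ.2 r).1, (hτ.2 r).2]

theorem IsMultiplier.prod {ι : Type*} {S : Finset ι} {σ : ι → Γ → Γ → Circle}
    (hσ : ∀ i ∈ S, IsMultiplier (σ i)) : IsMultiplier fun r s => ∏ i ∈ S, σ i r s := by
  have one : IsMultiplier fun (_ _ : Γ) => (1 : Circle) :=
    ⟨fun _ _ _ => rfl, fun _ => ⟨rfl, rfl⟩⟩
  convert Finset.prod_induction σ IsMultiplier (fun _ _ => IsMultiplier.mul) one hσ using 1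
  ext r s
  simp only [Finset.prod_apply]

end Multiplier

section Exponents

variable {n : ℕ} {i j k : Fin n}

lemma uc_mul (r s : G n) (i : Fin n) : uc (r * s) i = uc r i + uc s i := rfl

lemma uc_one (i : Fin n) : uc (1 : G n) i = 0 := rfl

lemma vc_one (j k : Fin n) : vc (1 : G n) j k = 0 := by
  unfold vc; split <;> rfl

lemma vc_mul (h : j < k) (r s : G n) :
    vc (r * s) j k = vc r j k + vc s j k + uc r j * uc s k := by
  simp only [vc, uc, dif_pos h, G.mul_v]

lemma _root_.Int.add_mul_add_sub_one_ediv_two (a b : ℤ) :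
    (a + b) * (a + b - 1) / 2 = a * (a - 1) / 2 + b * (b - 1) / 2 + a * b := by
  obtain ⟨m, hm⟩ := Int.even_mul_pred_self a
  obtain ⟨p, hp⟩ := Int.even_mul_pred_self b
  have hab : (a + b) * (a + b - 1) = m + m + (p + p) + 2 * (a * b) := by
    linear_combination hm + hp
  rw [hm, hp, hab]
  omega

lemma isIntCocycle_exponent_lam_ijk (hij : i < j) (hjk : j < k) :
    IsIntCocycle fun r s : G n => vc s j k * uc r i + uc s k * vc r i j := by
  refine ⟨fun r s t => ?_, fun r => ?_⟩
  · simp only [uc_mul, vc_mul hij, vc_mul hjk]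
    ring
  · simp [uc_one, vc_one]

lemma isIntCocycle_exponent_lam_jik (hij : i < j) (hjk : j < k) :
    IsIntCocycle fun r s : G n =>
      vc s i k * uc r j + uc s k * (uc r i * uc r j - vc r i j) := by
  refine ⟨fun r s t => ?_, fun r => ?_⟩
  · simp only [uc_mul, vc_mul hij, vc_mul (hij.trans hjk)]
    ring
  · simp [uc_one, vc_one]

lemma isIntCocycle_exponent_lam_jjk (hjk : j < k) :
    IsIntCocycle fun r s : G n =>
      vc s j k * uc r j + uc s k * (uc r j * (uc r j - 1) / 2) := by
  refine ⟨fun r s t => ?_, fun r => ?_⟩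
  · simp only [uc_mul, vc_mul hjk, Int.add_mul_add_sub_one_ediv_two]
    ring
  · simp [uc_one, vc_one]

lemma isIntCocycle_exponent_lam_kjk (hjk : j < k) :
    IsIntCocycle fun r s : G n =>
      uc r k * (vc s j k + uc r j * uc s k) + uc r j * (uc s k * (uc s k - 1) / 2) := by
  refine ⟨fun r s t => ?_, fun r => ?_⟩
  · simp only [uc_mul, vc_mul hjk, Int.add_mul_add_sub_one_ediv_two]
    ring
  · simp [uc_one, vc_one]

end Exponents

theorem sigmaLam_isMultiplier_general (n : ℕ)
    (lam : Fin n → Fin n → Fin n → Circle) :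
    IsMultiplier (sigmaLam lam) := by
  refine IsMultiplier.mul (IsMultiplier.prod fun t ht => ?_) (IsMultiplier.prod fun p hp => ?_)
  · obtain ⟨hij, hjk⟩ := (Finset.mem_filter.mp ht).2
    exact ((isIntCocycle_exponent_lam_ijk hij hjk).isMultiplier_zpow _).mul
      ((isIntCocycle_exponent_lam_jik hij hjk).isMultiplier_zpow _)
  · have hjk := (Finset.mem_filter.mp hp).2
    exact ((isIntCocycle_exponent_lam_jjk hjk).isMultiplier_zpow _).mul
      ((isIntCocycle_exponent_lam_kjk hjk).isMultiplier_zpow _)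

/-- for every family of parameters `λ`, the explicit map `σ_λ` is a
multiplier of `G(n)`. -/
theorem sigmaLam_isMultiplier (n : ℕ) (hn : 2 ≤ n)
    (lam : Fin n → Fin n → Fin n → Circle) :
    IsMultiplier (sigmaLam lam) :=
  sigmaLam_isMultiplier_general n lam

end FreeNilp
end
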